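/- The assignment Z_n ↦ Σ_{r_1+...+r_m = n} U_{r_1} U_{r_2} ... U_{r_m} / m! (sum over compositions of n) defines an isomorphism of bialgebras from NSymm ⊗ Q to LieHopf ⊗ Q, with inverse given by U_n ↦ Σ_{r_1+...+r_m = n} (-1)^{m+1} Z_{r_1} Z_{r_2} ... Z_{r_m} / m. -/

import Mathlib

open TensorProduct

/-- `NSymmQ = NSymm ⊗ ℚ` is the free associative algebra `ℚ⟨Z_1, Z_2, ...⟩`. -/
noncomputable abbrev NSymmQ : Type := FreeAlgebra ℚ ℕ

/-- `LieHopfQ = LieHopf ⊗ ℚ` is the free associative algebra `ℚ⟨U_1, U_2, ...⟩`. -/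
noncomputable abbrev LieHopfQ : Type := FreeAlgebra ℚ ℕ

/-- `Z 0 = 1` and `Z (n+1)` is the generator `Z_{n+1}` of `NSymmQ`. -/
noncomputable def Z : ℕ → NSymmQ
  | 0 => 1
  | n + 1 => FreeAlgebra.ι ℚ n

/-- `U 0 = 0` and `U (n+1)` is the generator `U_{n+1}` of `LieHopfQ`. -/
noncomputable def U : ℕ → LieHopfQ
  | 0 => 0
  | n + 1 => FreeAlgebra.ι ℚ n

/-- The comultiplication of `NSymmQ`: `μ(Z_n) = Σ_{i+j=n} Z_i ⊗ Z_j`. -/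
noncomputable def muN : NSymmQ →ₐ[ℚ] NSymmQ ⊗[ℚ] NSymmQ :=
  FreeAlgebra.lift ℚ fun n => ∑ i ∈ Finset.range (n + 2), Z i ⊗ₜ[ℚ] Z (n + 1 - i)

/-- The comultiplication of `LieHopfQ`: all `U_n` are primitive. -/
noncomputable def muL : LieHopfQ →ₐ[ℚ] LieHopfQ ⊗[ℚ] LieHopfQ :=
  FreeAlgebra.lift ℚ fun n =>
    FreeAlgebra.ι ℚ n ⊗ₜ[ℚ] 1 + 1 ⊗ₜ[ℚ] FreeAlgebra.ι ℚ n

/-- The counit of `NSymmQ`: `ε(Z_n) = 0` for `n ≥ 1`. -/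
noncomputable def epsN : NSymmQ →ₐ[ℚ] ℚ := FreeAlgebra.lift ℚ fun _ => (0 : ℚ)

/-- The counit of `LieHopfQ`: `ε(U_n) = 0`. -/
noncomputable def epsL : LieHopfQ →ₐ[ℚ] ℚ := FreeAlgebra.lift ℚ fun _ => (0 : ℚ)

/-!
With `u(t) = ∑ Uₙ tⁿ` and `z(t) = ∑_{n ≥ 1} Zₙ tⁿ`, the proposed images of `Zₙ` and `Uₙ` are the
`tⁿ`-coefficients of `exp u(t)` and `log (1 + z(t))`: a weighted sum
`∑_{c ⊨ n} w(ℓ(c)) g(c₁) ⋯ g(c_ℓ)` over compositions is the `tⁿ`-coefficient of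
`∑ₘ wₘ g(t)ᵐ`, even for noncommuting `g(j)`. Regrouping the blocks of a composition
(`Composition.sigmaEquivSigmaPi`) shows that these sums compose associatively, so the two algebra
maps are mutually inverse because `exp (log (1 + X)) = 1 + X` and `log (exp X) = X` in `ℚ⟦X⟧`,
which follow from the chain rule. The coproduct sends `u(t)` to `a + b` with `a = u ⊗ 1` and
`b = 1 ⊗ u`, which commute, and `exp (a + b) = exp a · exp b` gives `Δ Zₙ = ∑ Zᵢ ⊗ Zₙ₋ᵢ`.
-/

open Finset PowerSeries

theorem List.prod_ofFn_sum {A : Type*} [Semiring A] {n : ℕ} {α : Fin n → Type*}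
    [∀ i, Fintype (α i)] (f : ∀ i, α i → A) :
    (List.ofFn fun i => ∑ a : α i, f i a).prod
      = ∑ p : (∀ i, α i), (List.ofFn fun i => f i (p i)).prod := by
  induction n with
  | zero => simp
  | succ n ih =>
    rw [List.ofFn_succ, List.prod_cons, ih, Finset.sum_mul_sum, ← Fintype.sum_prod_type',
      ← (Fin.consEquiv α).sum_comp]
    simp [Fin.consEquiv, List.ofFn_succ]

theorem List.prod_ofFn_smul {R A : Type*} [CommSemiring R] [Semiring A] [Algebra R A] {n : ℕ}
    (r : Fin n → R) (x : Fin n → A) :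
    (List.ofFn fun i => r i • x i).prod = (List.ofFn r).prod • (List.ofFn x).prod := by
  induction n with
  | zero => simp
  | succ n ih =>
    simp only [List.ofFn_succ, List.prod_cons, ih, smul_mul_smul_comm]

theorem Composition.sum_blocks_zero {M : Type*} [AddCommMonoid M] (F : List ℕ → M) :
    ∑ c : Composition 0, F c.blocks = F [] := by
  have (c : Composition 0) : c = Composition.ones 0 :=
    Composition.ext (by simp [c.blocks_eq_nil.2 rfl])
  rw [Fintype.sum_eq_single (Composition.ones 0) fun c hc => absurd (this c) hc]
  simp

theorem Composition.sum_blocks_succ {M : Type*} [AddCommMonoid M] (F : List ℕ → M) (n : ℕ) :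
    ∑ c : Composition (n + 1), F c.blocks
      = ∑ j ∈ range (n + 1), ∑ c : Composition (n - j), F ((j + 1) :: c.blocks) := by
  rw [sum_sigma']
  symm
  refine sum_bij (fun x _ => ⟨(x.1 + 1) :: x.2.blocks, ?pos, ?sum⟩) (by simp) ?inj ?surj (by simp)
  case pos =>
    intro i hi
    rcases List.mem_cons.1 hi with rfl | h
    exacts [Nat.succ_pos _, x.2.blocks_pos h]
  case sum =>
    have := mem_range.1 (mem_sigma.1 ‹_›).1
    simp only [List.sum_cons, x.2.blocks_sum]
    omega
  case inj =>
    intro x _ y _ hxy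
    obtain ⟨j, c⟩ := x
    obtain ⟨j', c'⟩ := y
    obtain ⟨hj, hc⟩ := List.cons_eq_cons.1 (congrArg Composition.blocks hxy)
    obtain rfl : j = j' := Nat.succ_injective hj
    exact congrArg (Sigma.mk j) (Composition.ext hc)
  case surj =>
    intro c _
    obtain ⟨b, t, hbt⟩ := List.exists_cons_of_ne_nil (c.blocks_eq_nil.not.2 n.succ_ne_zero)
    have hb : 0 < b := c.blocks_pos (hbt ▸ List.mem_cons_self)
    have hsum : b + t.sum = n + 1 := by simpa [hbt] using c.blocks_sum
    refine ⟨⟨b - 1, t, fun hi => c.blocks_pos (hbt ▸ List.mem_cons_of_mem _ hi), by omega⟩,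
      by simp; omega, Composition.ext ?_⟩
    simp [hbt]
    omega

section CompositionSum

variable {R A : Type*} [CommSemiring R] [Semiring A] [Algebra R A]

noncomputable def compSum (w : ℕ → R) (g : ℕ → A) (n : ℕ) : A :=
  ∑ c : Composition n, w c.length • (c.blocks.map g).prod

theorem compSum_zero (w : ℕ → R) (g : ℕ → A) : compSum w g 0 = w 0 • 1 := by
  simp [compSum, Composition.sum_blocks_zero (fun l => w l.length • (l.map g).prod)]

theorem compSum_congr (w : ℕ → R) {g g' : ℕ → A} (h : ∀ j, 0 < j → g j = g' j) (n : ℕ) :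
    compSum w g n = compSum w g' n := by
  refine sum_congr rfl fun c _ => ?_
  rw [List.map_congr_left fun j hj => h j (c.blocks_pos hj)]

theorem compSum_eq_apply {w : ℕ → R} (hw₁ : w 1 = 1) (hw : ∀ k, 1 < k → w k = 0) (g : ℕ → A)
    {n : ℕ} (hn : 0 < n) : compSum w g n = g n := by
  rw [compSum, sum_eq_single (Composition.single n hn)]
  · simp [hw₁]
  · intro c _ hc
    have : 1 < c.length := by
      have := c.length_pos_of_pos hn
      have := mt (Composition.eq_single_iff_length hn).2 hc
      omega
    rw [hw _ this, zero_smul]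
  · simp

theorem compSum_zero_fun (w : ℕ → R) {n : ℕ} (hn : 0 < n) : compSum w (0 : ℕ → A) n = 0 := by
  refine sum_eq_zero fun c _ => ?_
  obtain ⟨b, t, hbt⟩ := List.exists_cons_of_ne_nil (c.blocks_eq_nil.not.2 hn.ne')
  simp [hbt]

theorem AlgHom.map_compSum {B : Type*} [Semiring B] [Algebra R B] (f : A →ₐ[R] B)
    (w : ℕ → R) (g : ℕ → A) (n : ℕ) : f (compSum w g n) = compSum w (fun j => f (g j)) n := by
  simp [compSum, map_list_prod, List.map_map, Function.comp_def]

theorem compSum_compSum (w v : ℕ → R) (g : ℕ → A) (n : ℕ) :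
    compSum w (compSum v g) n = compSum (compSum w v) g n := by
  have expand (c : Composition n) : w c.length • (c.blocks.map (compSum v g)).prod
      = ∑ d : (∀ i, Composition (c.blocksFun i)),
          w c.length • (List.ofFn fun i => v (d i).length • ((d i).blocks.map g).prod).prod := by
    rw [← c.ofFn_blocksFun, List.map_ofFn, Function.comp_def]
    simp only [compSum]
    rw [List.prod_ofFn_sum, smul_sum]
  simp only [compSum, sum_smul, expand]
  rw [← Fintype.sum_sigma', ← Fintype.sum_sigma', ← (Composition.sigmaEquivSigmaPi n).symm.sum_comp]
  refine Fintype.sum_congr _ _ fun ⟨c, d⟩ => ?_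
  simp [Composition.sigmaEquivSigmaPi, List.prod_ofFn_smul, List.map_ofFn, List.map_flatten,
    List.prod_flatten, mul_smul, Function.comp_def, Composition.length]

end CompositionSum

namespace PowerSeries

theorem coeff_mk_pow {A : Type*} [Semiring A] {g : ℕ → A} (hg : g 0 = 0) (n m : ℕ) :
    coeff n (mk g ^ m)
      = ∑ c : Composition n, if c.length = m then (c.blocks.map g).prod else 0 := by
  induction m generalizing n with
  | zero =>
    rcases n.eq_zero_or_pos with rfl | hn
    · rw [pow_zero, coeff_zero_one]
      exact ((Composition.sum_blocks_zero fun l => if l.length = 0 then (l.map g).prod else 0).trans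
        (by simp)).symm
    · simp [coeff_one, hn.ne', ((Composition.length_pos_iff _).2 hn).ne']
  | succ m ih =>
    rw [pow_succ', coeff_mul,
      Finset.Nat.sum_antidiagonal_eq_sum_range_succ fun i j => coeff i (mk g) * coeff j (mk g ^ m)]
    rcases n with _ | n
    · simp [hg, Composition.sum_blocks_zero (fun l => if l.length = m + 1 then (l.map g).prod else 0)]
    · rw [Composition.sum_blocks_succ (fun l => if l.length = m + 1 then (l.map g).prod else 0),
        sum_range_succ', coeff_mk, hg, zero_mul, add_zero]
      refine sum_congr rfl fun j hj => ?_
      rw [coeff_mk, ih, mul_sum, show n + 1 - (j + 1) = n - j by omega]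
      refine sum_congr rfl fun c _ => ?_
      simp only [List.length_cons, Nat.add_right_cancel_iff, List.map_cons, List.prod_cons, mul_ite,
        mul_zero]

theorem coeff_mk_pow_of_lt {A : Type*} [Semiring A] {g : ℕ → A} (hg : g 0 = 0) {n m : ℕ}
    (h : n < m) : coeff n (mk g ^ m) = 0 := by
  rw [coeff_mk_pow hg]
  exact sum_eq_zero fun c _ => if_neg (c.length_le.trans_lt h).ne

theorem compSum_eq_sum_coeff_pow {R A : Type*} [CommSemiring R] [Semiring A] [Algebra R A]
    (w : ℕ → R) {g : ℕ → A} (hg : g 0 = 0) {n N : ℕ} (hn : n ≤ N) :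
    compSum w g n = ∑ m ∈ range (N + 1), w m • coeff n (mk g ^ m) := by
  simp only [coeff_mk_pow hg, smul_sum, smul_ite, smul_zero]
  rw [sum_comm]
  refine sum_congr rfl fun c _ => ?_
  rw [sum_ite_eq, if_pos (mem_range.2 (Nat.lt_succ_of_le (c.length_le.trans hn)))]

theorem coeff_subst_mk {R : Type*} [CommRing R] (w : ℕ → R) {g : ℕ → R} (hg : g 0 = 0) (n : ℕ) :
    coeff n ((mk w).subst (mk g)) = compSum w g n := by
  rw [coeff_subst' (HasSubst.of_constantCoeff_zero' (by simpa using hg)),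
    compSum_eq_sum_coeff_pow w hg le_rfl, finsum_eq_sum_of_support_subset (s := range (n + 1))]
  · simp
  · exact Function.support_subset_iff'.2 fun m hm => by
      simp [coeff_mk_pow_of_lt hg (by simpa using hm : n < m)]

section ExpLog

variable {A : Type*} [CommRing A] [Algebra ℚ A]

theorem one_add_X_mul_derivative_log : (1 + X) * d⁄dX A (log A) = 1 := by
  ext n
  rw [deriv_log, add_mul, one_mul, map_add]
  rcases n with _ | n
  · simp
  · rw [coeff_succ_X_mul]
    simp [pow_succ]

theorem exp_subst_log : (exp A).subst (log A) = 1 + X := by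
  have := IsAddTorsionFree.of_module_rat (M := A)
  set E : A⟦X⟧ := (exp A).subst (log A)
  set G := d⁄dX A (log A)
  have hG : (1 + X) * G = 1 := one_add_X_mul_derivative_log
  have hE : d⁄dX A E = E * G := by
    rw [derivative_subst HasSubst.log, derivative_exp]
  have hG' : d⁄dX A G = -(G * G) := by
    have h := congrArg (d⁄dX A) hG
    rw [Derivation.leibniz, map_add, derivative_X, derivative_one, zero_add, smul_eq_mul,
      smul_eq_mul, mul_one] at h
    linear_combination G * h - d⁄dX A G * hG
  have hE₀ : constantCoeff E = 1 := by
    have h := constantCoeff_subst_eq_zero (a := log A) constantCoeff_log (exp A - 1)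
      (sub_eq_zero.2 constantCoeff_exp)
    rwa [← coe_substAlgHom HasSubst.log, map_sub, map_one, coe_substAlgHom, map_sub, map_one,
      sub_eq_zero] at h
  have hEG : E * G = 1 := by
    refine derivative.ext ?_ ?_
    · rw [Derivation.leibniz, hE, hG', derivative_one, smul_eq_mul, smul_eq_mul]
      ring
    · rw [map_mul, map_one, hE₀, one_mul, ← coeff_zero_eq_constantCoeff_apply]
      simp [G, deriv_log]
  linear_combination (1 + X) * hEG - E * hG

theorem log_subst_exp_sub_one : (log A).subst (exp A - 1) = X := by
  have := IsAddTorsionFree.of_module_rat (M := A)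
  refine derivative.ext ?_ ?_
  · have h := congrArg (substAlgHom (HasSubst.exp_sub_one (A := A)))
      (one_add_X_mul_derivative_log (A := A))
    rw [map_mul, map_add, map_one, substAlgHom_X, add_sub_cancel] at h
    rw [derivative_subst HasSubst.exp_sub_one, map_sub, derivative_exp, derivative_one, sub_zero,
      derivative_X, ← coe_substAlgHom HasSubst.exp_sub_one, mul_comm, h]
  · rw [constantCoeff_X]
    exact constantCoeff_subst_eq_zero (sub_eq_zero.2 constantCoeff_exp) _ constantCoeff_log

end ExpLog

end PowerSeries

noncomputable def expCoeff (m : ℕ) : ℚ := (m.factorial : ℚ)⁻¹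

noncomputable def logCoeff (m : ℕ) : ℚ := (-1) ^ (m + 1) / m

theorem mk_expCoeff : mk expCoeff = exp ℚ := by
  ext m
  simp [expCoeff]

theorem mk_logCoeff : mk logCoeff = log ℚ := by
  ext m
  rcases m with _ | m <;> simp [logCoeff]

theorem compSum_expCoeff_logCoeff (k : ℕ) :
    compSum expCoeff logCoeff k = coeff k (1 + X : ℚ⟦X⟧) := by
  rw [← coeff_subst_mk _ (by simp [logCoeff]), mk_expCoeff, mk_logCoeff, exp_subst_log]

theorem compSum_logCoeff_expCoeff (k : ℕ) :
    compSum logCoeff expCoeff k = coeff k (X : ℚ⟦X⟧) := by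
  have hexp : mk (fun j => if j = 0 then 0 else expCoeff j) = exp ℚ - 1 := by
    ext j
    rcases j with _ | j <;> simp [expCoeff]
  rw [compSum_congr logCoeff (g' := fun j => if j = 0 then 0 else expCoeff j)
      (fun j hj => (if_neg hj.ne').symm), ← coeff_subst_mk _ (by simp), mk_logCoeff, hexp,
    log_subst_exp_sub_one]

namespace PowerSeries

variable {B : Type*} [Semiring B]

theorem coeff_pow_mul_pow_of_lt {a b : B⟦X⟧} (ha : constantCoeff a = 0) (hb : constantCoeff b = 0)
    {n p q : ℕ} (h : n < p + q) : coeff n (a ^ p * b ^ q) = 0 :=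
  coeff_of_lt_order n <| (by exact_mod_cast h : (n : ℕ∞) < p + q).trans_le <|
    (add_le_add (le_order_pow_of_constantCoeff_eq_zero p ha)
      (le_order_pow_of_constantCoeff_eq_zero q hb)).trans (le_order_mul _ _)

theorem commute_of_commute_coeff {a b : B⟦X⟧} (h : ∀ i j, Commute (coeff i a) (coeff j b)) :
    Commute a b := by
  ext n
  rw [coeff_mul, coeff_mul]
  conv_rhs => rw [← Finset.Nat.sum_antidiagonal_swap]
  exact sum_congr rfl fun ij _ => (h ij.1 ij.2).eq

end PowerSeries

section TruncExp

variable {B : Type*} [Ring B] [Algebra ℚ B]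

-- For a power series `x` without constant term this agrees with `exp x` up to degree `N`;
-- truncating avoids infinite sums over a noncommutative coefficient ring.
noncomputable def truncExp (N : ℕ) (x : B) : B := ∑ m ∈ range (N + 1), expCoeff m • x ^ m

theorem map_truncExp {C : Type*} [Ring C] [Algebra ℚ C] (f : B →+* C) (N : ℕ) (x : B) :
    f (truncExp N x) = truncExp N (f x) := by
  simp [truncExp, map_rat_smul]

theorem expCoeff_mul_choose {p m : ℕ} (h : p ≤ m) :
    expCoeff m * m.choose p = expCoeff p * expCoeff (m - p) := by
  rw [Nat.cast_choose ℚ h, expCoeff, expCoeff, expCoeff]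
  field_simp

theorem truncExp_add {x y : B} (h : Commute x y) (N : ℕ) :
    truncExp N (x + y) = ∑ p ∈ range (N + 1), ∑ q ∈ range (N + 1 - p),
      (expCoeff p * expCoeff q) • (x ^ p * y ^ q) := by
  rw [← sum_range_diag_flip, truncExp]
  refine sum_congr rfl fun m _ => ?_
  rw [h.add_pow, smul_sum]
  refine sum_congr rfl fun p hp => ?_
  rw [← nsmul_eq_mul', ← Nat.cast_smul_eq_nsmul ℚ, smul_smul,
    expCoeff_mul_choose (Nat.le_of_lt_succ (mem_range.1 hp))]

theorem truncExp_mul_truncExp (N : ℕ) (x y : B) :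
    truncExp N x * truncExp N y = ∑ p ∈ range (N + 1), ∑ q ∈ range (N + 1),
      (expCoeff p * expCoeff q) • (x ^ p * y ^ q) := by
  simp only [truncExp, sum_mul_sum, smul_mul_smul_comm]

namespace PowerSeries

theorem coeff_truncExp_add {a b : B⟦X⟧} (h : Commute a b) (ha : constantCoeff a = 0)
    (hb : constantCoeff b = 0) {n N : ℕ} (hn : n ≤ N) :
    coeff n (truncExp N (a + b)) = coeff n (truncExp N a * truncExp N b) := by
  simp only [truncExp_add h, truncExp_mul_truncExp, map_sum]
  refine sum_congr rfl fun p _ => sum_subset (range_subset_range.2 (by omega)) fun q _ hq => ?_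
  rw [map_rat_smul, coeff_pow_mul_pow_of_lt ha hb (by simp at hq; omega), smul_zero]

theorem coeff_truncExp_mk {g : ℕ → B} (hg : g 0 = 0) {n N : ℕ} (hn : n ≤ N) :
    coeff n (truncExp N (mk g)) = compSum expCoeff g n := by
  simp [compSum_eq_sum_coeff_pow expCoeff hg hn, truncExp, map_rat_smul]

end PowerSeries

end TruncExp

open Algebra.TensorProduct in
theorem comul_compSum_expCoeff {A : Type*} [Ring A] [Algebra ℚ A] (Δ : A →ₐ[ℚ] A ⊗[ℚ] A)
    {g : ℕ → A} (hg : g 0 = 0) (hΔ : ∀ j, Δ (g j) = g j ⊗ₜ 1 + 1 ⊗ₜ g j) (n : ℕ) :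
    Δ (compSum expCoeff g n)
      = ∑ ij ∈ antidiagonal n, compSum expCoeff g ij.1 ⊗ₜ[ℚ] compSum expCoeff g ij.2 := by
  set a := PowerSeries.map (includeLeft : A →ₐ[ℚ] A ⊗[ℚ] A).toRingHom (mk g)
  set b := PowerSeries.map (includeRight : A →ₐ[ℚ] A ⊗[ℚ] A).toRingHom (mk g)
  have hΔg : PowerSeries.map Δ.toRingHom (mk g) = a + b := by
    ext j
    simp [a, b, hΔ]
  have hab : Commute a b := commute_of_commute_coeff fun i j => by
    simp [a, b, Commute, SemiconjBy]
  have ha : constantCoeff a = 0 := by simp [a, ← coeff_zero_eq_constantCoeff_apply, hg]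
  have hb : constantCoeff b = 0 := by simp [b, ← coeff_zero_eq_constantCoeff_apply, hg]
  calc Δ (compSum expCoeff g n)
      = coeff n (truncExp n (PowerSeries.map Δ.toRingHom (mk g))) := by
        rw [← map_truncExp, coeff_map, coeff_truncExp_mk hg le_rfl]
        rfl
    _ = coeff n (truncExp n a * truncExp n b) := by
        rw [hΔg, coeff_truncExp_add hab ha hb le_rfl]
    _ = _ := by
        rw [coeff_mul]
        refine sum_congr rfl fun ij hij => ?_
        have := mem_antidiagonal.1 hij
        rw [← map_truncExp, ← map_truncExp, coeff_map, coeff_map,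
          coeff_truncExp_mk hg (by omega : ij.1 ≤ n), coeff_truncExp_mk hg (by omega : ij.2 ≤ n)]
        simp

noncomputable def nsymmToLieHopf : NSymmQ →ₐ[ℚ] LieHopfQ :=
  FreeAlgebra.lift ℚ fun n => compSum expCoeff U (n + 1)

noncomputable def lieHopfToNSymm : LieHopfQ →ₐ[ℚ] NSymmQ :=
  FreeAlgebra.lift ℚ fun n => compSum logCoeff Z (n + 1)

theorem nsymmToLieHopf_Z (n : ℕ) : nsymmToLieHopf (Z n) = compSum expCoeff U n := by
  cases n with
  | zero => simp [Z, compSum_zero, expCoeff]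
  | succ n => exact FreeAlgebra.lift_ι_apply _ _

theorem lieHopfToNSymm_U (n : ℕ) : lieHopfToNSymm (U n) = compSum logCoeff Z n := by
  cases n with
  | zero => simp [U, compSum_zero, logCoeff]
  | succ n => exact FreeAlgebra.lift_ι_apply _ _

theorem lieHopfToNSymm_comp_nsymmToLieHopf :
    lieHopfToNSymm.comp nsymmToLieHopf = AlgHom.id ℚ NSymmQ := by
  refine FreeAlgebra.hom_ext (funext fun n => ?_)
  change lieHopfToNSymm (nsymmToLieHopf (Z (n + 1))) = Z (n + 1)
  rw [nsymmToLieHopf_Z, AlgHom.map_compSum]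
  simp only [lieHopfToNSymm_U]
  rw [compSum_compSum, funext compSum_expCoeff_logCoeff]
  exact compSum_eq_apply (by simp [coeff_one]) (fun k hk => by simp [coeff_one, coeff_X,
    hk.ne', (zero_lt_one.trans hk).ne']) Z n.succ_pos

theorem nsymmToLieHopf_comp_lieHopfToNSymm :
    nsymmToLieHopf.comp lieHopfToNSymm = AlgHom.id ℚ LieHopfQ := by
  refine FreeAlgebra.hom_ext (funext fun n => ?_)
  change nsymmToLieHopf (lieHopfToNSymm (U (n + 1))) = U (n + 1)
  rw [lieHopfToNSymm_U, AlgHom.map_compSum]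
  simp only [nsymmToLieHopf_Z]
  rw [compSum_compSum, funext compSum_logCoeff_expCoeff]
  exact compSum_eq_apply (by simp) (fun k hk => by simp [coeff_X, hk.ne']) U n.succ_pos

theorem muL_U (n : ℕ) : muL (U n) = U n ⊗ₜ[ℚ] 1 + 1 ⊗ₜ[ℚ] U n := by
  cases n with
  | zero => simp [U]
  | succ n => exact FreeAlgebra.lift_ι_apply _ _

theorem muL_comp_nsymmToLieHopf :
    muL.comp nsymmToLieHopf
      = (Algebra.TensorProduct.map nsymmToLieHopf nsymmToLieHopf).comp muN := by
  refine FreeAlgebra.hom_ext (funext fun n => ?_)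
  change muL (nsymmToLieHopf (Z (n + 1))) = _
  rw [nsymmToLieHopf_Z, comul_compSum_expCoeff muL rfl muL_U, Function.comp_apply,
    AlgHom.comp_apply, muN, FreeAlgebra.lift_ι_apply, map_sum,
    Finset.Nat.sum_antidiagonal_eq_sum_range_succ (fun i j => compSum expCoeff U i ⊗ₜ[ℚ]
      compSum expCoeff U j)]
  simp [nsymmToLieHopf_Z]

theorem epsL_comp_nsymmToLieHopf : epsL.comp nsymmToLieHopf = epsN := by
  refine FreeAlgebra.hom_ext (funext fun n => ?_)
  have hU : (fun j => epsL (U j)) = 0 := funext fun j => by cases j <;> simp [U, epsL]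
  change epsL (nsymmToLieHopf (Z (n + 1))) = epsN (FreeAlgebra.ι ℚ n)
  rw [nsymmToLieHopf_Z, AlgHom.map_compSum, hU, compSum_zero_fun _ n.succ_pos, epsN,
    FreeAlgebra.lift_ι_apply]

/-- The assignment `Z_n ↦ Σ U_{r_1} ⋯ U_{r_m}/m!` (sum over compositions of `n`) defines an
isomorphism of bialgebras `NSymm ⊗ ℚ ≃ LieHopf ⊗ ℚ`, with inverse
`U_n ↦ Σ (-1)^{m+1} Z_{r_1} ⋯ Z_{r_m}/m`. -/
theorem stmt_13 :
    ∃ φ : NSymmQ ≃ₐ[ℚ] LieHopfQ,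
      (∀ n : ℕ, 1 ≤ n →
        φ (Z n) = ∑ c : Composition n,
          ((c.length.factorial : ℚ))⁻¹ • (c.blocks.map U).prod) ∧
      (∀ n : ℕ, 1 ≤ n →
        φ.symm (U n) = ∑ c : Composition n,
          ((-1 : ℚ) ^ (c.length + 1) / c.length) • (c.blocks.map Z).prod) ∧
      (∀ x : NSymmQ,
        muL (φ x) = Algebra.TensorProduct.map φ.toAlgHom φ.toAlgHom (muN x)) ∧
      (∀ x : NSymmQ, epsL (φ x) = epsN x) := by
  refine ⟨AlgEquiv.ofAlgHom nsymmToLieHopf lieHopfToNSymm nsymmToLieHopf_comp_lieHopfToNSymm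
    lieHopfToNSymm_comp_nsymmToLieHopf, fun n _ => nsymmToLieHopf_Z n,
    fun n _ => lieHopfToNSymm_U n, fun x => ?_, fun x => ?_⟩
  · exact DFunLike.congr_fun muL_comp_nsymmToLieHopf x
  · exact DFunLike.congr_fun epsL_comp_nsymmToLieHopf x
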